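/- arXiv:1101.5959 — 2 statements merged into one kernel-verified Lean document; each statement's English description precedes it below -/
import Mathlib

section
/- Let X, Y be Banach spaces, F₁, F₂ : X ⇉ Y with ȳ ∈ F₁(x̄) ∩ F₂(x̄), graphs locally closed around (x̄,ȳ), F₁ metrically regular around (x̄,ȳ) with constant l > 0, F₂ Lipschitz-like around (x̄,ȳ) with constant m > 0, and lm < 1. Let S := {x ∈ X : F₁(x) ∩ F₂(x) ≠ ∅} = Fix(F₁⁻¹ ∘ F₂). Then there exist α, β > 0 such that for every x ∈ B(x̄,α), d(x, S) ≤ (l⁻¹ − m)⁻¹ · d(F₁(x) ∩ B(ȳ,β), F₂(x)). -/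
/-!
Starting from `x` and a nearly optimal pair `y ∈ F₁ x ∩ B(y₀, β)`, `z ∈ F₂ x`, alternate the two
hypotheses: metric regularity of `F₁` (with any constant `κ > l`) moves `p` to `p'` with
`u ∈ F₁ p'` at cost `κ · d(u, v)`, where `v ∈ F₁ p`, and the Aubin property of `F₂` then provides
`u' ∈ F₂ p'` with `d(u, u') ≤ m · d(p, p')`. The gaps shrink by the factor `κm < 1`, so both
sequences are Cauchy; their limits lie in both (locally closed) graphs and give a coincidence point
at distance at most `κ / (1 - κm) · d(y, z)` from `x`. Letting `κ ↓ l` and `d(y, z)` tend to the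
infimum gives the constant `l / (1 - lm) = (l⁻¹ - m)⁻¹`. When that right-hand side is large
compared with `d(x, x₀)`, the point `x₀ ∈ S` already does the job.
-/

open Set Metric Pointwise Filter Topology

section

variable {X Y : Type*}

def MetricRegularOn [PseudoMetricSpace X] [PseudoMetricSpace Y] (F : X → Set Y) (l : ℝ)
    (U : Set X) (V : Set Y) : Prop :=
  ∀ x ∈ U, ∀ y ∈ V, infEDist x {x' | y ∈ F x'} ≤ ENNReal.ofReal l * infEDist y (F x)

def LipschitzLikeOn [PseudoMetricSpace X] [PseudoMetricSpace Y] (F : X → Set Y) (m : ℝ)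
    (U : Set X) (V : Set Y) : Prop :=
  ∀ x ∈ U, ∀ x' ∈ U, ∀ y ∈ F x ∩ V, ∃ y' ∈ F x', dist y y' ≤ m * dist x x'

theorem lipschitzLikeOn_of_subset_add_smul_closedBall [NormedAddCommGroup X]
    [NormedAddCommGroup Y] [NormedSpace ℝ Y] {F : X → Set Y} {m : ℝ} (hm : 0 ≤ m)
    {U : Set X} {V : Set Y}
    (h : ∀ x ∈ U, ∀ x' ∈ U, F x ∩ V ⊆ F x' + (m * ‖x - x'‖) • closedBall (0 : Y) 1) :
    LipschitzLikeOn F m U V := by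
  intro x hx x' hx' y hy
  have hy' := h x hx x' hx' hy
  rw [smul_unitClosedBall_of_nonneg (by positivity)] at hy'
  obtain ⟨y', hy', w, hw, rfl⟩ := hy'
  refine ⟨y', hy', ?_⟩
  rw [dist_self_add_left, dist_eq_norm]
  exact mem_closedBall_zero_iff.1 hw

theorem MetricRegularOn.exists_dist_le [PseudoMetricSpace X] [MetricSpace Y]
    {F : X → Set Y} {l κ : ℝ} {U : Set X} {V : Set Y} (hF : MetricRegularOn F l U V)
    (hl : 0 ≤ l) (hlκ : l < κ) {x : X} (hx : x ∈ U) {y v : Y} (hy : y ∈ V) (hv : v ∈ F x) :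
    ∃ x', y ∈ F x' ∧ dist x x' ≤ κ * dist y v := by
  rcases eq_or_ne y v with rfl | hyv
  · exact ⟨x, hv, by simp⟩
  have hlt : infEDist x {x' | y ∈ F x'} < ENNReal.ofReal (κ * dist y v) :=
    calc infEDist x {x' | y ∈ F x'}
        ≤ ENNReal.ofReal l * edist y v :=
          (hF x hx y hy).trans (by gcongr; exact infEDist_le_edist_of_mem hv)
      _ = ENNReal.ofReal (l * dist y v) := by rw [edist_dist, ENNReal.ofReal_mul hl]
      _ < ENNReal.ofReal (κ * dist y v) := by
        have hyv := dist_pos.2 hyv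
        exact (ENNReal.ofReal_lt_ofReal_iff (mul_pos (hl.trans_lt hlκ) hyv)).2 (by gcongr)
  obtain ⟨x', hx', hxx'⟩ := infEDist_lt_iff.1 hlt
  exact ⟨x', hx', (edist_lt_ofReal.1 hxx').le⟩

theorem eventually_isClosed_inter_closedBall [PseudoMetricSpace X] {s : Set X} {a : X}
    (h : ∃ r > 0, IsClosed (s ∩ closedBall a r)) :
    ∀ᶠ ρ in 𝓝 (0 : ℝ), IsClosed (s ∩ closedBall a ρ) := by
  obtain ⟨r, hr, hs⟩ := h
  filter_upwards [Iic_mem_nhds hr] with ρ hρ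
  rw [← inter_eq_right.2 (closedBall_subset_closedBall hρ), ← inter_assoc]
  exact hs.inter isClosed_closedBall

theorem mem_of_tendsto_of_isClosed_graph_inter_closedBall [PseudoMetricSpace X]
    [PseudoMetricSpace Y] {ι : Type*} {F : X → Set Y} {x₀ : X} {y₀ : Y} {ρ : ℝ}
    (hF : IsClosed ({q : X × Y | q.2 ∈ F q.1} ∩ closedBall (x₀, y₀) ρ))
    {f : Filter ι} [f.NeBot] {a : ι → X} {b : ι → Y} {x : X} {y : Y}
    (ha : Tendsto a f (𝓝 x)) (hb : Tendsto b f (𝓝 y))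
    (h : ∀ᶠ i in f, b i ∈ F (a i) ∧ a i ∈ closedBall x₀ ρ ∧ b i ∈ closedBall y₀ ρ) :
    y ∈ F x :=
  (hF.mem_of_tendsto (ha.prodMk_nhds hb) <| h.mono fun _ hi =>
    ⟨hi.1, closedBall_prod_same x₀ y₀ ρ ▸ ⟨hi.2.1, hi.2.2⟩⟩).1

theorem exists_mem_inter_of_le_geometric [MetricSpace X] [CompleteSpace X] [MetricSpace Y]
    [CompleteSpace Y] {F₁ F₂ : X → Set Y} {x₀ : X} {y₀ : Y} {ρ : ℝ}
    (hcl₁ : IsClosed ({q : X × Y | q.2 ∈ F₁ q.1} ∩ closedBall (x₀, y₀) ρ))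
    (hcl₂ : IsClosed ({q : X × Y | q.2 ∈ F₂ q.1} ∩ closedBall (x₀, y₀) ρ))
    {p : ℕ → X} {u : ℕ → Y} {C C' r : ℝ} (hr : r < 1)
    (hp : ∀ n, dist (p n) (p (n + 1)) ≤ C * r ^ n)
    (hu : ∀ n, dist (u n) (u (n + 1)) ≤ C' * r ^ n)
    (h₁ : ∀ n, u n ∈ F₁ (p (n + 1))) (h₂ : ∀ n, u n ∈ F₂ (p n))
    (hpρ : ∀ n, p n ∈ closedBall x₀ ρ) (huρ : ∀ n, u n ∈ closedBall y₀ ρ) :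
    ∃ x', (F₁ x' ∩ F₂ x').Nonempty ∧ Tendsto p atTop (𝓝 x') := by
  obtain ⟨x', hx'⟩ := cauchySeq_tendsto_of_complete (cauchySeq_of_le_geometric _ _ hr hp)
  obtain ⟨y', hy'⟩ := cauchySeq_tendsto_of_complete (cauchySeq_of_le_geometric _ _ hr hu)
  refine ⟨x', ⟨y', ?_, ?_⟩, hx'⟩
  · exact mem_of_tendsto_of_isClosed_graph_inter_closedBall hcl₁
      (hx'.comp (tendsto_add_atTop_nat 1)) hy' (.of_forall fun n => ⟨h₁ n, hpρ (n + 1), huρ n⟩)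
  · exact mem_of_tendsto_of_isClosed_graph_inter_closedBall hcl₂ hx' hy'
      (.of_forall fun n => ⟨h₂ n, hpρ n, huρ n⟩)

theorem exists_seq_of_forall_exists {σ : Type*} {Q : σ → Prop} {R : σ → σ → Prop}
    (h : ∀ s, Q s → ∃ s', Q s' ∧ R s s') {s₀ : σ} (h₀ : Q s₀) :
    ∃ s : ℕ → σ, s 0 = s₀ ∧ ∀ n, Q (s n) ∧ R (s n) (s (n + 1)) := by
  choose! next hnextQ hnextR using h
  have hQ : ∀ n, Q (next^[n] s₀) := by
    intro n
    induction n with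
    | zero => exact h₀
    | succ n ih => rw [Function.iterate_succ_apply']; exact hnextQ _ ih
  refine ⟨fun n => next^[n] s₀, rfl, fun n => ⟨hQ n, ?_⟩⟩
  simpa only [Function.iterate_succ_apply'] using hnextR _ (hQ n)

theorem dist_add_mul_le_dist_add_mul [PseudoMetricSpace X] {a b b' : X} {K c θ d d' : ℝ}
    (hK : 0 ≤ K) (hKc : c + K * θ = K) (hb : dist b b' ≤ c * d) (hd : d' ≤ θ * d) :
    dist a b' + K * d' ≤ dist a b + K * d :=
  calc dist a b' + K * d' ≤ dist a b + c * d + K * (θ * d) :=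
        add_le_add ((dist_triangle a b b').trans (by gcongr)) (by gcongr)
    _ = dist a b + K * d := by linear_combination d * hKc

theorem MetricRegularOn.exists_next [MetricSpace X] [MetricSpace Y] {F₁ F₂ : X → Set Y}
    {x₀ : X} {y₀ : Y} {l κ m ρ K t : ℝ}
    (hF₁ : MetricRegularOn F₁ l (closedBall x₀ ρ) (closedBall y₀ ρ))
    (hF₂ : LipschitzLikeOn F₂ m (closedBall x₀ ρ) (closedBall y₀ ρ))
    (hl : 0 ≤ l) (hlκ : l < κ) (hm : 0 ≤ m) (hK0 : 0 ≤ K) (hKκ : κ + K * (κ * m) = K)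
    {x : X} {z : Y} (hxρ : dist x x₀ + K * t ≤ ρ) (hzρ : dist z y₀ + m * K * t ≤ ρ)
    {p : X} {v u : Y} (hv : v ∈ F₁ p) (hu : u ∈ F₂ p)
    (hpx : dist x p + K * dist u v ≤ K * t) (huz : dist z u + m * K * dist u v ≤ m * K * t) :
    ∃ p' u', u ∈ F₁ p' ∧ u' ∈ F₂ p' ∧
      dist x p' + K * dist u' u ≤ K * t ∧ dist z u' + m * K * dist u' u ≤ m * K * t ∧
      dist p p' ≤ κ * dist u v ∧ dist u' u ≤ κ * m * dist u v := by
  have hKd : 0 ≤ K * dist u v := mul_nonneg hK0 dist_nonneg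
  have hκK : κ ≤ K := by linarith [mul_nonneg hK0 (mul_nonneg (hl.trans hlκ.le) hm)]
  have hκd : κ * dist u v ≤ K * dist u v := mul_le_mul_of_nonneg_right hκK dist_nonneg
  have hp : p ∈ closedBall x₀ ρ := (dist_triangle_left p x₀ x).trans (by linarith)
  have hu' : u ∈ closedBall y₀ ρ :=
    (dist_triangle_left u y₀ z).trans (by linarith [mul_nonneg hm hKd])
  obtain ⟨p', hp'F, hpp'⟩ := hF₁.exists_dist_le hl hlκ hp hu' hv
  have hp' : p' ∈ closedBall x₀ ρ :=
    (dist_triangle_left p' x₀ x).trans (by linarith [dist_triangle x p p'])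
  obtain ⟨u', hu'F, huu'⟩ := hF₂ p hp p' hp' u ⟨hu, hu'⟩
  have huu'' : dist u u' ≤ κ * m * dist u v :=
    (huu'.trans (mul_le_mul_of_nonneg_left hpp' hm)).trans_eq (by ring)
  have hu'u : dist u' u ≤ κ * m * dist u v := dist_comm u u' ▸ huu''
  refine ⟨p', u', hp'F, hu'F, ?_, ?_, hpp', hu'u⟩
  · exact (dist_add_mul_le_dist_add_mul hK0 hKκ hpp' hu'u).trans hpx
  · exact (dist_add_mul_le_dist_add_mul (mul_nonneg hm hK0) (by linear_combination m * hKκ)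
      huu'' hu'u).trans huz

theorem exists_coincidence_dist_le [MetricSpace X] [CompleteSpace X] [MetricSpace Y]
    [CompleteSpace Y] {F₁ F₂ : X → Set Y} {x₀ : X} {y₀ : Y} {l κ m ρ : ℝ}
    (hcl₁ : IsClosed ({q : X × Y | q.2 ∈ F₁ q.1} ∩ closedBall (x₀, y₀) ρ))
    (hcl₂ : IsClosed ({q : X × Y | q.2 ∈ F₂ q.1} ∩ closedBall (x₀, y₀) ρ))
    (hF₁ : MetricRegularOn F₁ l (closedBall x₀ ρ) (closedBall y₀ ρ))
    (hF₂ : LipschitzLikeOn F₂ m (closedBall x₀ ρ) (closedBall y₀ ρ))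
    (hl : 0 ≤ l) (hlκ : l < κ) (hm : 0 ≤ m) (hκm : κ * m < 1)
    {x : X} {y z : Y} (hy : y ∈ F₁ x) (hz : z ∈ F₂ x)
    (hxρ : dist x x₀ + κ / (1 - κ * m) * dist y z ≤ ρ)
    (hzρ : dist z y₀ + m * (κ / (1 - κ * m)) * dist y z ≤ ρ) :
    ∃ x', (F₁ x' ∩ F₂ x').Nonempty ∧ dist x x' ≤ κ / (1 - κ * m) * dist y z := by
  set K := κ / (1 - κ * m) with hK
  set t := dist y z
  have hκ : 0 ≤ κ := hl.trans hlκ.le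
  have hK0 : 0 ≤ K := div_nonneg hκ (sub_nonneg.2 hκm.le)
  have hKκ : κ + K * (κ * m) = K := by
    rw [hK]; field_simp [(sub_pos.2 hκm).ne']; ring
  -- For a state `(p, v, u)`, the potentials `dist x p + K * dist u v` and
  -- `dist z u + m * K * dist u v` do not increase, so every iterate stays in the balls.
  let Q : X × Y × Y → Prop := fun s => s.2.1 ∈ F₁ s.1 ∧ s.2.2 ∈ F₂ s.1 ∧
    dist x s.1 + K * dist s.2.2 s.2.1 ≤ K * t ∧
    dist z s.2.2 + m * K * dist s.2.2 s.2.1 ≤ m * K * t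
  let R : X × Y × Y → X × Y × Y → Prop := fun s s' => s'.2.1 = s.2.2 ∧
    dist s.1 s'.1 ≤ κ * dist s.2.2 s.2.1 ∧ dist s'.2.2 s'.2.1 ≤ κ * m * dist s.2.2 s.2.1
  have step : ∀ s, Q s → ∃ s', Q s' ∧ R s s' := by
    rintro ⟨p, v, u⟩ ⟨hv, hu, hpx, huz⟩
    obtain ⟨p', u', hp', hu', hpx', huz', hpp', hu'u⟩ :=
      hF₁.exists_next hF₂ hl hlκ hm hK0 hKκ hxρ hzρ hv hu hpx huz
    exact ⟨(p', u, u'), ⟨hp', hu', hpx', huz'⟩, rfl, hpp', hu'u⟩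
  obtain ⟨s, hs₀, hs⟩ := exists_seq_of_forall_exists step (s₀ := (x, y, z))
    ⟨hy, hz, by simp [t, dist_comm], by simp [t, dist_comm]⟩
  have hgap (n : ℕ) : dist (s n).2.2 (s n).2.1 ≤ (κ * m) ^ n * t := by
    simpa [hs₀, t, dist_comm] using
      le_geom (u := fun n => dist (s n).2.2 (s n).2.1) (mul_nonneg hκ hm) n
        fun k _ => (hs k).2.2.2
  have hbound (n : ℕ) : dist x (s n).1 ≤ K * t ∧ dist z (s n).2.2 ≤ m * K * t := by
    have hKd := mul_nonneg hK0 (dist_nonneg (x := (s n).2.2) (y := (s n).2.1))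
    have := mul_nonneg hm hKd
    constructor <;> linarith [(hs n).1.2.2]
  obtain ⟨x', hx', hsx'⟩ := exists_mem_inter_of_le_geometric (u := fun n => (s n).2.2)
    (C := κ * t) (C' := κ * m * t) hcl₁ hcl₂ hκm
    (fun n => (hs n).2.2.1.trans ((mul_le_mul_of_nonneg_left (hgap n) hκ).trans_eq (by ring)))
    (fun n => by
      rw [← (hs n).2.1, dist_comm]
      exact (hgap (n + 1)).trans_eq (by ring))
    (fun n => (hs n).2.1 ▸ (hs (n + 1)).1.1) (fun n => (hs n).1.2.1)
    (fun n => (dist_triangle_left _ x₀ x).trans (by linarith [hbound n]))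
    (fun n => (dist_triangle_left _ y₀ z).trans (by linarith [hbound n]))
  exact ⟨x', hx', le_of_tendsto (tendsto_const_nhds.dist hsx') (.of_forall fun n => (hbound n).1)⟩

theorem infEDist_coincidence_le_of_lt [MetricSpace X] [CompleteSpace X] [NormedAddCommGroup Y]
    [CompleteSpace Y] {F₁ F₂ : X → Set Y} {x₀ : X} {y₀ : Y} {l κ m ρ : ℝ}
    (hcl₁ : IsClosed ({q : X × Y | q.2 ∈ F₁ q.1} ∩ closedBall (x₀, y₀) ρ))
    (hcl₂ : IsClosed ({q : X × Y | q.2 ∈ F₂ q.1} ∩ closedBall (x₀, y₀) ρ))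
    (hF₁ : MetricRegularOn F₁ l (closedBall x₀ ρ) (closedBall y₀ ρ))
    (hF₂ : LipschitzLikeOn F₂ m (closedBall x₀ ρ) (closedBall y₀ ρ))
    (hl : 0 ≤ l) (hlκ : l < κ) (hm : 0 ≤ m) (hκm : κ * m < 1) {x : X} {β t : ℝ}
    (hxρ : dist x x₀ + κ / (1 - κ * m) * t ≤ ρ)
    (hβρ : β + (1 + m * (κ / (1 - κ * m))) * t ≤ ρ)
    (ht : infEDist (0 : Y) ((F₁ x ∩ ball y₀ β) - F₂ x) < ENNReal.ofReal t) :
    infEDist x {x' | (F₁ x' ∩ F₂ x').Nonempty} ≤ ENNReal.ofReal (κ / (1 - κ * m) * t) := by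
  have hK0 : 0 ≤ κ / (1 - κ * m) := div_nonneg (hl.trans hlκ.le) (sub_nonneg.2 hκm.le)
  obtain ⟨_, ⟨y, ⟨hy, hyβ⟩, z, hz, rfl⟩, hyz⟩ := infEDist_lt_iff.1 ht
  rw [edist_lt_ofReal, dist_zero_left, ← dist_eq_norm] at hyz
  have hzy₀ : dist z y₀ < t + β := (dist_triangle_left z y₀ y).trans_lt (by
    rw [mem_ball] at hyβ; linarith)
  obtain ⟨x', hx', hxx'⟩ := exists_coincidence_dist_le hcl₁ hcl₂ hF₁ hF₂ hl hlκ hm hκm hy hz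
    (by linarith [mul_le_mul_of_nonneg_left hyz.le hK0])
    (by linarith [mul_le_mul_of_nonneg_left hyz.le (mul_nonneg hm hK0)])
  calc infEDist x {x' | (F₁ x' ∩ F₂ x').Nonempty}
      ≤ edist x x' := infEDist_le_edist_of_mem hx'
    _ = ENNReal.ofReal (dist x x') := edist_dist x x'
    _ ≤ ENNReal.ofReal (κ / (1 - κ * m) * t) := ENNReal.ofReal_le_ofReal (hxx'.trans (by gcongr))

theorem infEDist_coincidence_le [MetricSpace X] [CompleteSpace X] [NormedAddCommGroup Y]
    [CompleteSpace Y] {F₁ F₂ : X → Set Y} {x₀ : X} {y₀ : Y} {l m ρ : ℝ}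
    (hcl₁ : IsClosed ({q : X × Y | q.2 ∈ F₁ q.1} ∩ closedBall (x₀, y₀) ρ))
    (hcl₂ : IsClosed ({q : X × Y | q.2 ∈ F₂ q.1} ∩ closedBall (x₀, y₀) ρ))
    (hF₁ : MetricRegularOn F₁ l (closedBall x₀ ρ) (closedBall y₀ ρ))
    (hF₂ : LipschitzLikeOn F₂ m (closedBall x₀ ρ) (closedBall y₀ ρ))
    (hl : 0 ≤ l) (hm : 0 ≤ m) (hlm : l * m < 1) {x : X} {β d : ℝ} (hd : 0 ≤ d)
    (hD : infEDist (0 : Y) ((F₁ x ∩ ball y₀ β) - F₂ x) ≤ ENNReal.ofReal d)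
    (hxρ : dist x x₀ + l / (1 - l * m) * d < ρ)
    (hβρ : β + (1 + m * (l / (1 - l * m))) * d < ρ) :
    infEDist x {x' | (F₁ x' ∩ F₂ x').Nonempty} ≤ ENNReal.ofReal (l / (1 - l * m) * d) := by
  -- Use the constant `l + δ` and the bound `d + δ`, then let `δ → 0`.
  set K : ℝ → ℝ := fun δ => (l + δ) / (1 - (l + δ) * m)
  have hK : ContinuousAt K 0 :=
    ContinuousAt.div (by fun_prop) (by fun_prop) (by simp [(sub_pos.2 hlm).ne'])
  have hlim : ContinuousAt (fun δ => K δ * (d + δ)) 0 := hK.mul (by fun_prop)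
  have hm_ev : ∀ᶠ δ in 𝓝 (0 : ℝ), (l + δ) * m < 1 :=
    (by fun_prop : ContinuousAt (fun δ : ℝ => (l + δ) * m) 0).eventually_lt continuousAt_const
      (by simpa using hlm)
  have hx_ev : ∀ᶠ δ in 𝓝 (0 : ℝ), dist x x₀ + K δ * (d + δ) < ρ :=
    (continuousAt_const.add hlim).eventually_lt continuousAt_const (by simpa [K] using hxρ)
  have hβ_ev : ∀ᶠ δ in 𝓝 (0 : ℝ), β + (1 + m * K δ) * (d + δ) < ρ :=
    (continuousAt_const.add ((continuousAt_const.add (continuousAt_const.mul hK)).mul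
      (by fun_prop))).eventually_lt continuousAt_const (by simpa [K] using hβρ)
  have hlim' : Tendsto (fun δ => K δ * (d + δ)) (𝓝[>] 0) (𝓝 (l / (1 - l * m) * d)) := by
    simpa [K] using hlim.tendsto.mono_left nhdsWithin_le_nhds
  refine ge_of_tendsto (ENNReal.tendsto_ofReal hlim') ?_
  filter_upwards [(hm_ev.and (hx_ev.and hβ_ev)).filter_mono nhdsWithin_le_nhds,
    self_mem_nhdsWithin] with δ ⟨hmδ, hxδ, hβδ⟩ (hδ : 0 < δ)
  exact infEDist_coincidence_le_of_lt hcl₁ hcl₂ hF₁ hF₂ hl (lt_add_of_pos_right l hδ) hm hmδ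
    hxδ.le hβδ.le (hD.trans_lt ((ENNReal.ofReal_lt_ofReal_iff (by positivity)).2 (by linarith)))

theorem exists_infEDist_coincidence_le [MetricSpace X] [CompleteSpace X] [NormedAddCommGroup Y]
    [CompleteSpace Y] {F₁ F₂ : X → Set Y} {x₀ : X} {y₀ : Y} {l m ρ : ℝ}
    (hcl₁ : IsClosed ({q : X × Y | q.2 ∈ F₁ q.1} ∩ closedBall (x₀, y₀) ρ))
    (hcl₂ : IsClosed ({q : X × Y | q.2 ∈ F₂ q.1} ∩ closedBall (x₀, y₀) ρ))
    (hF₁ : MetricRegularOn F₁ l (closedBall x₀ ρ) (closedBall y₀ ρ))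
    (hF₂ : LipschitzLikeOn F₂ m (closedBall x₀ ρ) (closedBall y₀ ρ))
    (hl : 0 < l) (hm : 0 ≤ m) (hlm : l * m < 1) (hρ : 0 < ρ) (hy₀ : y₀ ∈ F₁ x₀ ∩ F₂ x₀) :
    ∃ α > 0, ∃ β > 0, ∀ x ∈ ball x₀ α,
      infEDist x {x' | (F₁ x' ∩ F₂ x').Nonempty} ≤
        ENNReal.ofReal (l⁻¹ - m)⁻¹ * infEDist (0 : Y) ((F₁ x ∩ ball y₀ β) - F₂ x) := by
  have hc : (l⁻¹ - m)⁻¹ = l / (1 - l * m) := by field_simp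
  set c := l / (1 - l * m)
  have hc0 : 0 < c := div_pos hl (sub_pos.2 hlm)
  set α := min (ρ / 2) (c * (ρ / (2 * (1 + m * c))))
  refine ⟨α, by positivity, ρ / 2, half_pos hρ, fun x hx => ?_⟩
  rw [hc]
  set D := infEDist (0 : Y) ((F₁ x ∩ ball y₀ (ρ / 2)) - F₂ x)
  have hxα : dist x x₀ < α := hx
  rcases le_or_gt (ENNReal.ofReal α) (ENNReal.ofReal c * D) with hD | hD
  · calc infEDist x {x' | (F₁ x' ∩ F₂ x').Nonempty}
        ≤ edist x x₀ := infEDist_le_edist_of_mem ⟨y₀, hy₀⟩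
      _ ≤ ENNReal.ofReal c * D := (edist_lt_ofReal.2 hxα).le.trans hD
  have hDtop : D ≠ ⊤ := fun h => by simp [h, hc0] at hD
  rw [← ENNReal.ofReal_toReal hDtop, ← ENNReal.ofReal_mul hc0.le] at hD ⊢
  have hcD : c * D.toReal < α := (ENNReal.ofReal_lt_ofReal_iff (by positivity)).1 hD
  have hDρ : D.toReal * (2 * (1 + m * c)) < ρ := (lt_div_iff₀ (by positivity)).1 <|
    lt_of_mul_lt_mul_left (hcD.trans_le (min_le_right _ _)) hc0.le
  refine infEDist_coincidence_le hcl₁ hcl₂ hF₁ hF₂ hl.le hm hlm ENNReal.toReal_nonneg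
    (ENNReal.ofReal_toReal hDtop).ge ?_ (by linarith)
  linarith [min_le_left (ρ / 2) (c * (ρ / (2 * (1 + m * c))))]

end

/-- Here `infEDist 0 (A - B)` is the paper's `d(A, B)`; it is `∞` when `A` or `B` is empty. -/
theorem dontchev_frankowska_fixed_point_general
    {X Y : Type*} [NormedAddCommGroup X] [CompleteSpace X]
    [NormedAddCommGroup Y] [NormedSpace ℝ Y] [CompleteSpace Y]
    (F₁ F₂ : X → Set Y) (x₀ : X) (y₀ : Y)
    (hy : y₀ ∈ F₁ x₀ ∩ F₂ x₀)
    (l m : ℝ) (hl : 0 < l) (hm : 0 < m) (hlm : l * m < 1)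
    (hcl₁ : ∃ r > 0, IsClosed ({q : X × Y | q.2 ∈ F₁ q.1} ∩ Metric.closedBall (x₀, y₀) r))
    (hcl₂ : ∃ r > 0, IsClosed ({q : X × Y | q.2 ∈ F₂ q.1} ∩ Metric.closedBall (x₀, y₀) r))
    -- F₁ is l-metrically regular around (x₀, y₀)
    (hreg : ∃ U ∈ nhds x₀, ∃ V ∈ nhds y₀, ∀ x ∈ U, ∀ y ∈ V,
      EMetric.infEdist x {x' | y ∈ F₁ x'} ≤ ENNReal.ofReal l * EMetric.infEdist y (F₁ x))
    -- F₂ is m-Lipschitz-like around (x₀, y₀)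
    (hlip : ∃ U ∈ nhds x₀, ∃ V ∈ nhds y₀, ∀ x ∈ U, ∀ u ∈ U,
      F₂ x ∩ V ⊆ F₂ u + (m * ‖x - u‖) • Metric.closedBall (0:Y) 1) :
    ∃ α > 0, ∃ β > 0, ∀ x ∈ ball x₀ α,
      EMetric.infEdist x {x' | (F₁ x' ∩ F₂ x').Nonempty} ≤
        ENNReal.ofReal (l⁻¹ - m)⁻¹ *
          EMetric.infEdist (0:Y) ((F₁ x ∩ ball y₀ β) - F₂ x) := by
  obtain ⟨U₁, hU₁, V₁, hV₁, hreg⟩ := hreg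
  obtain ⟨U₂, hU₂, V₂, hV₂, hlip⟩ := hlip
  obtain ⟨ρ, ⟨⟨hU₁ρ, hV₁ρ, hU₂ρ, hV₂ρ⟩, hcl₁ρ, hcl₂ρ⟩, hρ⟩ :=
    (((eventually_closedBall_subset hU₁).and <| (eventually_closedBall_subset hV₁).and <|
      (eventually_closedBall_subset hU₂).and (eventually_closedBall_subset hV₂)).and
      ((eventually_isClosed_inter_closedBall hcl₁).and (eventually_isClosed_inter_closedBall hcl₂))
      |>.filter_mono nhdsWithin_le_nhds |>.and self_mem_nhdsWithin).exists (f := 𝓝[>] (0 : ℝ))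
  exact exists_infEDist_coincidence_le hcl₁ρ hcl₂ρ
    (fun x hx y hy => hreg x (hU₁ρ hx) y (hV₁ρ hy))
    (lipschitzLikeOn_of_subset_add_smul_closedBall hm.le fun x hx u hu =>
      (inter_subset_inter_right _ hV₂ρ).trans (hlip x (hU₂ρ hx) u (hU₂ρ hu)))
    hl hm.le hlm hρ hy

/-- Dontchev–Frankowska fixed point estimate: the distance from `x` to the coincidence
set `S = {x : F₁(x) ∩ F₂(x) ≠ ∅}` is bounded by `(l⁻¹ − m)⁻¹ · d(F₁(x) ∩ B(y₀,β), F₂(x))`,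
where `d(A,B) = d(0, A − B)` (with value `∞` if one of the sets is empty). -/
theorem dontchev_frankowska_fixed_point
    {X Y : Type*} [NormedAddCommGroup X] [NormedSpace ℝ X] [CompleteSpace X]
    [NormedAddCommGroup Y] [NormedSpace ℝ Y] [CompleteSpace Y]
    (F₁ F₂ : X → Set Y) (x₀ : X) (y₀ : Y)
    (hy : y₀ ∈ F₁ x₀ ∩ F₂ x₀)
    (l m : ℝ) (hl : 0 < l) (hm : 0 < m) (hlm : l * m < 1)
    (hcl₁ : ∃ r > 0, IsClosed ({q : X × Y | q.2 ∈ F₁ q.1} ∩ Metric.closedBall (x₀, y₀) r))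
    (hcl₂ : ∃ r > 0, IsClosed ({q : X × Y | q.2 ∈ F₂ q.1} ∩ Metric.closedBall (x₀, y₀) r))
    -- F₁ is l-metrically regular around (x₀, y₀)
    (hreg : ∃ U ∈ nhds x₀, ∃ V ∈ nhds y₀, ∀ x ∈ U, ∀ y ∈ V,
      EMetric.infEdist x {x' | y ∈ F₁ x'} ≤ ENNReal.ofReal l * EMetric.infEdist y (F₁ x))
    -- F₂ is m-Lipschitz-like around (x₀, y₀)
    (hlip : ∃ U ∈ nhds x₀, ∃ V ∈ nhds y₀, ∀ x ∈ U, ∀ u ∈ U,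
      F₂ x ∩ V ⊆ F₂ u + (m * ‖x - u‖) • Metric.closedBall (0:Y) 1) :
    ∃ α > 0, ∃ β > 0, ∀ x ∈ ball x₀ α,
      EMetric.infEdist x {x' | (F₁ x' ∩ F₂ x').Nonempty} ≤
        ENNReal.ofReal (l⁻¹ - m)⁻¹ *
          EMetric.infEdist (0:Y) ((F₁ x ∩ ball y₀ β) - F₂ x) :=
  dontchev_frankowska_fixed_point_general F₁ F₂ x₀ y₀ hy l m hl hm hlm hcl₁ hcl₂ hreg hlip
end

section
/- Let X, Y be Banach spaces and F : X ⇉ Y, G : Y ⇉ X set-valued maps with locally closed graphs, and let L, M > 0 with LM > 1. If F is L-open at every point of its graph and G is M-open at every point of its graph, then F − G⁻¹ is (L − M⁻¹)-open at every point of its graph. -/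
/-!
Fix `(x₀, y₀ - z₀)` in the graph of `F - G⁻¹` and a target `w` at distance `δ`. Apply Ekeland's
variational principle to the residual `‖w - (y - z)‖` on the closed set of triples
`(x, y, z)` with `y ∈ F x` and `x ∈ G z` near `(x₀, y₀, z₀)`, in a metric that weighs the
`X`-coordinate by a rate `κ < L - M⁻¹` and the other two coordinates lightly. At a triple with
nonzero residual, openness of `F` at `(x, y)` moves `y` towards `w + z` by about `ρ L` with a
step `ρ` in `x`, and openness of `G` at `(z, x)` follows this step in `x` with a step `ρ / M`
in `z`. The residual drops by about `ρ (L - M⁻¹) > ρ κ`, more than the weighted distance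
travelled, so the Ekeland point has zero residual, and it lies within `δ / κ` of `x₀` in `X`.
-/

open Set Metric Pointwise Filter Topology

section Ekeland

variable {α : Type*} [PseudoMetricSpace α] {S : Set α} {f : α → ℝ} {ε : ℝ} {a b : α}

namespace Ekeland

def improvementSet (S : Set α) (f : α → ℝ) (ε : ℝ) (a : α) : Set α :=
  {b ∈ S | f b + ε * dist b a ≤ f a}

theorem self_mem_improvementSet (ha : a ∈ S) : a ∈ improvementSet S f ε a :=
  ⟨ha, by simp⟩

theorem improvementSet_subset (hε : 0 ≤ ε) (hb : b ∈ improvementSet S f ε a) :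
    improvementSet S f ε b ⊆ improvementSet S f ε a := by
  rintro c ⟨hcS, hc⟩
  refine ⟨hcS, ?_⟩
  have := mul_le_mul_of_nonneg_left (dist_triangle c b a) hε
  linarith [hb.2]

theorem isClosed_improvementSet (hS : IsClosed S) (hf : LowerSemicontinuous f) :
    IsClosed (improvementSet S f ε a) :=
  hS.inter <| (hf.add (continuous_const.mul (continuous_id.dist continuous_const)
    |>.lowerSemicontinuous)).isClosed_preimage (f a)

theorem exists_improvementSet_approx_min (hbdd : BddBelow (f '' S)) (ha : a ∈ S) {e : ℝ}
    (he : 0 < e) : ∃ b ∈ improvementSet S f ε a, ∀ c ∈ improvementSet S f ε a, f b ≤ f c + e := by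
  have hne : (f '' improvementSet S f ε a).Nonempty := ⟨f a, a, self_mem_improvementSet ha, rfl⟩
  have hbdd' : BddBelow (f '' improvementSet S f ε a) := hbdd.mono (image_mono fun _ h => h.1)
  obtain ⟨_, ⟨b, hb, rfl⟩, hlt⟩ := exists_lt_of_csInf_lt hne (lt_add_of_pos_right _ he)
  exact ⟨b, hb, fun c hc => by linarith [csInf_le hbdd' (mem_image_of_mem f hc)]⟩

theorem exists_approx_min_seq (hbdd : BddBelow (f '' S)) (ha : a ∈ S) :
    ∃ u : ℕ → α, u 0 = a ∧ ∀ n, u (n + 1) ∈ improvementSet S f ε (u n) ∧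
      ∀ c ∈ improvementSet S f ε (u n), f (u (n + 1)) ≤ f c + (1 / 2) ^ n := by
  have step : ∀ (n : ℕ) (a : S), ∃ b : S, b.1 ∈ improvementSet S f ε a ∧
      ∀ c ∈ improvementSet S f ε a, f b ≤ f c + (1 / 2) ^ n := fun n a => by
    obtain ⟨b, hb, hmin⟩ :=
      exists_improvementSet_approx_min hbdd a.2 (by positivity : (0 : ℝ) < (1 / 2) ^ n)
    exact ⟨⟨b, hb.1⟩, hb, hmin⟩
  choose g hg using step
  let u : ℕ → S := fun n => Nat.rec ⟨a, ha⟩ g n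
  have hu : ∀ n, u (n + 1) = g n (u n) := fun _ => rfl
  refine ⟨fun n => (u n).1, rfl, fun n => ?_⟩
  simpa only [hu] using hg n (u n)

end Ekeland

open Ekeland in
theorem exists_ekeland_point [CompleteSpace α] (hS : IsClosed S) (hf : LowerSemicontinuous f)
    (hbdd : BddBelow (f '' S)) (hε : 0 < ε) (ha : a ∈ S) :
    ∃ x ∈ S, f x + ε * dist x a ≤ f a ∧ ∀ y ∈ S, f x ≤ f y + ε * dist y x := by
  obtain ⟨u, hu0, hu⟩ := exists_approx_min_seq (ε := ε) hbdd ha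
  set T := fun n => improvementSet S f ε (u n)
  have huS : ∀ n, u n ∈ S
    | 0 => hu0 ▸ ha
    | n + 1 => (hu n).1.1
  have hanti : Antitone T := antitone_nat_of_succ_le fun n => improvementSet_subset hε.le (hu n).1
  have hmem : ∀ n m, n ≤ m → u m ∈ T n := fun n m h => hanti h (self_mem_improvementSet (huS m))
  have hsmall : ∀ n, ∀ c ∈ T (n + 1), ε * dist c (u (n + 1)) ≤ (1 / 2) ^ n := fun n c hc => by
    linarith [(hu n).2 c (hanti n.le_succ hc), hc.2]
  have hcauchy : CauchySeq u := by
    refine Metric.cauchySeq_iff'.2 fun e he => ?_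
    obtain ⟨N, hN⟩ := exists_pow_lt_of_lt_one (mul_pos hε he) (by norm_num : (1 / 2 : ℝ) < 1)
    refine ⟨N + 1, fun n hn => lt_of_mul_lt_mul_left ?_ hε.le⟩
    exact (hsmall N (u n) (hmem _ _ hn)).trans_lt hN
  obtain ⟨x, hx⟩ := cauchySeq_tendsto_of_complete hcauchy
  have hxT : ∀ n, x ∈ T n := fun n =>
    (isClosed_improvementSet hS hf).mem_of_tendsto hx (eventually_atTop.2 ⟨n, hmem n⟩)
  refine ⟨x, (hxT 0).1, hu0 ▸ (hxT 0).2, fun y hy => ?_⟩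
  by_cases hyx : f y + ε * dist y x ≤ f x
  · have hyT : ∀ n, y ∈ T n := fun n => improvementSet_subset hε.le (hxT n) ⟨hy, hyx⟩
    have hxy : ∀ n, f x ≤ f y + (1 / 2) ^ n := fun n => by
      linarith [(hu n).2 y (hyT n), (hxT (n + 1)).2,
        mul_nonneg hε.le (dist_nonneg (x := x) (y := u (n + 1)))]
    have hlim : Tendsto (fun n : ℕ => f y + (1 / 2 : ℝ) ^ n) atTop (𝓝 (f y)) := by
      simpa using (tendsto_pow_atTop_nhds_zero_of_lt_one (by norm_num : (0:ℝ) ≤ 1 / 2)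
        (by norm_num)).const_add (f y)
    linarith [ge_of_tendsto' hlim hxy, mul_nonneg hε.le (dist_nonneg (x := y) (y := x))]
  · linarith

theorem exists_eq_zero_of_strict_descent [CompleteSpace α] (hS : IsClosed S)
    (hf : LowerSemicontinuous f) (hf0 : ∀ x ∈ S, 0 ≤ f x) (hε : 0 < ε) (ha : a ∈ S)
    (hdescent : ∀ x ∈ S, f x + ε * dist x a ≤ f a → 0 < f x →
      ∃ y ∈ S, f y + ε * dist y x < f x) :
    ∃ x ∈ S, f x = 0 ∧ ε * dist x a ≤ f a := by
  obtain ⟨x, hxS, hxa, hmin⟩ :=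
    exists_ekeland_point hS hf ⟨0, by rintro _ ⟨x, hx, rfl⟩; exact hf0 x hx⟩ hε ha
  have hx0 : f x = 0 := (hf0 x hxS).eq_or_lt'.resolve_right fun hpos => by
    obtain ⟨y, hyS, hy⟩ := hdescent x hxS hxa hpos
    exact (hmin y hyS).not_gt hy
  exact ⟨x, hxS, hx0, by linarith⟩

end Ekeland

def IsOpenAtRate {X Y : Type*} [PseudoMetricSpace X] [PseudoMetricSpace Y] (F : X → Set Y)
    (L : ℝ) (x : X) (y : Y) : Prop :=
  ∃ ε > 0, ∀ ρ ∈ Ioo (0 : ℝ) ε, ball y (ρ * L) ⊆ ⋃ x' ∈ ball x ρ, F x'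

theorem IsOpenAtRate.exists_descent {X Y : Type*} [PseudoMetricSpace X]
    [SeminormedAddCommGroup Y] [NormedSpace ℝ Y] {F : X → Set Y} {G : Y → Set X}
    {L M κ η : ℝ} {x : X} {y z w : Y} (hF : IsOpenAtRate F L x y) (hG : IsOpenAtRate G M z x)
    (hM : 0 < M) (hκ : 0 ≤ κ) (hκL : κ + M⁻¹ < L) (hd : 0 < dist w (y - z)) (hη : 0 < η) :
    ∃ ρ ∈ Ioo 0 η, ∃ x' y' z', y' ∈ F x' ∧ x' ∈ G z' ∧ dist x' x < ρ ∧ dist y' y < ρ * L ∧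
      dist z' z < ρ * M⁻¹ ∧ dist w (y' - z') ≤ dist w (y - z) - ρ * κ := by
  obtain ⟨εF, hεF, hF⟩ := hF
  obtain ⟨εG, hεG, hG⟩ := hG
  set d := dist w (y - z)
  have hL : 0 < L := by linarith [inv_pos.2 hM]
  set ρ := min (min εF (εG * M)) (min (d / L) η) / 2
  have hρ : 0 < ρ := by positivity
  have hρ' : ρ < min (min εF (εG * M)) (min (d / L) η) := half_lt_self (by positivity)
  simp only [lt_min_iff] at hρ'
  obtain ⟨⟨hρF, hρG⟩, hρd, hρη⟩ := hρ'
  rw [lt_div_iff₀ hL] at hρd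
  rw [← div_lt_iff₀ hM, div_eq_mul_inv] at hρG
  -- Move `y` towards `w + z` by `(κ + M⁻¹) ρ < ρ L`; the `G`-step then costs at most `ρ M⁻¹`.
  set t := (κ + M⁻¹) * ρ / d
  have htd : t * d = (κ + M⁻¹) * ρ := div_mul_cancel₀ _ hd.ne'
  have ht : 0 ≤ t := by positivity
  have ht1 : t ≤ 1 := by
    rw [div_le_one hd]; nlinarith
  set y' := y + t • (w - (y - z))
  have hy' : dist y' y = (κ + M⁻¹) * ρ := by
    rw [dist_eq_norm, add_sub_cancel_left, norm_smul, Real.norm_of_nonneg ht, ← dist_eq_norm, htd]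
  obtain ⟨x', hx', hy'F⟩ := mem_iUnion₂.1 <|
    hF ρ ⟨hρ, hρF⟩ (mem_ball.2 (by rw [hy']; nlinarith))
  obtain ⟨z', hz', hx'G⟩ := mem_iUnion₂.1 <|
    hG (ρ * M⁻¹) ⟨by positivity, hρG⟩ (by rwa [inv_mul_cancel_right₀ hM.ne'])
  refine ⟨ρ, ⟨hρ, hρη⟩, x', y', z', hy'F, hx'G, hx', by rw [hy']; nlinarith, hz', ?_⟩
  have herr : w - (y' - z') = (1 - t) • (w - (y - z)) + (z' - z) := by
    simp only [y', sub_smul, one_smul]; abel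
  calc dist w (y' - z') ≤ (1 - t) * d + dist z' z := by
        rw [dist_eq_norm, herr, dist_eq_norm z']
        refine (norm_add_le _ _).trans ?_
        rw [norm_smul, Real.norm_of_nonneg (by linarith), ← dist_eq_norm]
    _ ≤ d - ρ * κ := by linarith [mem_ball.1 hz']

theorem isClosed_inter_closedBall_of_le {α : Type*} [PseudoMetricSpace α] {S : Set α} {p : α}
    {r r' : ℝ} (h : IsClosed (S ∩ closedBall p r)) (hr : r' ≤ r) :
    IsClosed (S ∩ closedBall p r') := by
  rw [← inter_eq_right.2 (closedBall_subset_closedBall hr), ← inter_assoc]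
  exact h.inter isClosed_closedBall

section CoupledGraph

variable {X Y : Type*} [PseudoMetricSpace X] [PseudoMetricSpace Y] {F : X → Set Y} {G : Y → Set X}

def coupledGraph (F : X → Set Y) (G : Y → Set X) (p₀ : X × Y × Y) (r : ℝ) : Set (X × Y × Y) :=
  {p | p.2.1 ∈ F p.1 ∧ p.1 ∈ G p.2.2} ∩ closedBall p₀ r

theorem isClosed_coupledGraph {x₀ : X} {y₀ z₀ : Y} {r : ℝ}
    (hΓF : IsClosed ({q : X × Y | q.2 ∈ F q.1} ∩ closedBall (x₀, y₀) r))
    (hΓG : IsClosed ({q : Y × X | q.2 ∈ G q.1} ∩ closedBall (z₀, x₀) r)) :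
    IsClosed (coupledGraph F G (x₀, y₀, z₀) r) := by
  have : coupledGraph F G (x₀, y₀, z₀) r =
      {p | (p.1, p.2.1) ∈ {q : X × Y | q.2 ∈ F q.1} ∩ closedBall (x₀, y₀) r ∧
        (p.2.2, p.1) ∈ {q : Y × X | q.2 ∈ G q.1} ∩ closedBall (z₀, x₀) r} ∩
      closedBall (x₀, y₀, z₀) r := by
    ext p
    simp only [coupledGraph, mem_inter_iff, mem_ofPred_eq, mem_closedBall, Prod.dist_eq,
      max_le_iff]
    tauto
  rw [this]
  exact ((hΓF.preimage (by fun_prop)).inter (hΓG.preimage (by fun_prop))).inter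
    isClosed_closedBall

end CoupledGraph

section ScaleFst

variable {X Z : Type*} [NormedAddCommGroup X] [NormedSpace ℝ X] [PseudoMetricSpace Z]

def scaleFst (Λ : ℝ) (p : X × Z) : X × Z := (Λ • p.1, p.2)

theorem dist_scaleFst {Λ : ℝ} (hΛ : 0 ≤ Λ) (p q : X × Z) :
    dist (scaleFst Λ p) (scaleFst Λ q) = max (Λ * dist p.1 q.1) (dist p.2 q.2) := by
  simp only [scaleFst, Prod.dist_eq, dist_smul₀, Real.norm_of_nonneg hΛ]

theorem dist_le_dist_scaleFst {Λ : ℝ} (hΛ : 1 ≤ Λ) (p q : X × Z) :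
    dist p q ≤ dist (scaleFst Λ p) (scaleFst Λ q) := by
  rw [dist_scaleFst (by linarith), Prod.dist_eq]
  exact max_le_max (le_mul_of_one_le_left dist_nonneg hΛ) le_rfl

theorem IsClosed.image_scaleFst {Λ : ℝ} (hΛ : Λ ≠ 0) {S : Set (X × Z)} (hS : IsClosed S) :
    IsClosed (scaleFst Λ '' S) :=
  ((Homeomorph.smulOfNeZero Λ hΛ).prodCongr (Homeomorph.refl Z)).isClosed_image.2 hS

end ScaleFst

section Coupling

variable {X Y : Type*} [NormedAddCommGroup X] [NormedSpace ℝ X] [NormedAddCommGroup Y]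
  [NormedSpace ℝ Y] {F : X → Set Y} {G : Y → Set X} {L M κ Λ μ : ℝ}

theorem exists_scaleFst_descent {p : X × Y × Y} (hF : IsOpenAtRate F L p.1 p.2.1)
    (hG : IsOpenAtRate G M p.2.2 p.1) (hM : 0 < M) (hκ : 0 < κ) (hκL : κ + M⁻¹ < L)
    (hμ : 0 < μ) (hμΛ : μ * Λ = κ) (hμL : μ * L ≤ κ) (hμM : μ * M⁻¹ ≤ κ) {w : Y}
    (hpos : 0 < dist w (p.2.1 - p.2.2)) {η : ℝ} (hη : 0 < η) :
    ∃ p' : X × Y × Y, p'.2.1 ∈ F p'.1 ∧ p'.1 ∈ G p'.2.2 ∧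
      μ * dist (scaleFst Λ p') (scaleFst Λ p) < η * κ ∧
      dist w (p'.2.1 - p'.2.2) + μ * dist (scaleFst Λ p') (scaleFst Λ p) <
        dist w (p.2.1 - p.2.2) := by
  obtain ⟨ρ, ⟨hρ, hρη⟩, x', y', z', hy', hx', hdx, hdy, hdz, herr⟩ :=
    hF.exists_descent hG hM hκ.le hκL hpos hη
  have hΛ : 0 < Λ := pos_of_mul_pos_right (hμΛ ▸ hκ) hμ.le
  have hstep : μ * dist (scaleFst Λ (x', y', z')) (scaleFst Λ p) < ρ * κ := by
    rw [dist_scaleFst hΛ.le, Prod.dist_eq, mul_max_of_nonneg _ _ hμ.le, mul_max_of_nonneg _ _ hμ.le,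
      ← mul_assoc, hμΛ, max_lt_iff, max_lt_iff]
    refine ⟨by nlinarith, ?_, ?_⟩
    · nlinarith [mul_lt_mul_of_pos_left hdy hμ]
    · nlinarith [mul_lt_mul_of_pos_left hdz hμ]
  exact ⟨(x', y', z'), hy', hx', by nlinarith, by linarith⟩

-- `μ * dist (scaleFst Λ p) (scaleFst Λ q)` weighs the `X`-coordinate by `κ = μ * Λ` and the
-- other two by `μ`, which is small against `κ / L` and `κ * M`.
theorem exists_mem_sub_preimage_of_isOpenAtRate [CompleteSpace X] [CompleteSpace Y]
    (hF : ∀ x, ∀ y ∈ F x, IsOpenAtRate F L x y) (hG : ∀ y, ∀ x ∈ G y, IsOpenAtRate G M y x)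
    (hM : 0 < M) (hκ : 0 < κ) (hκL : κ + M⁻¹ < L) {r : ℝ} {x₀ : X} {y₀ z₀ : Y}
    (hy₀ : y₀ ∈ F x₀) (hz₀ : x₀ ∈ G z₀)
    (hΓF : IsClosed ({q : X × Y | q.2 ∈ F q.1} ∩ closedBall (x₀, y₀) r))
    (hΓG : IsClosed ({q : Y × X | q.2 ∈ G q.1} ∩ closedBall (z₀, x₀) r))
    {w : Y} (hw : dist w (y₀ - z₀) * (L + M⁻¹ + 1) < κ * r) :
    ∃ x, κ * dist x x₀ ≤ dist w (y₀ - z₀) ∧ w ∈ F x - {z | x ∈ G z} := by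
  set δ := dist w (y₀ - z₀)
  set Λ := L + M⁻¹ + 1
  have hΛ : 1 ≤ Λ := by linarith [inv_pos.2 hM]
  set μ := κ / Λ
  have hμ : 0 < μ := by positivity
  have hμΛ : μ * Λ = κ := div_mul_cancel₀ _ (by positivity)
  have hr : 0 ≤ r := by nlinarith [dist_nonneg (x := w) (y := y₀ - z₀)]
  have hδ : δ < μ * r := by rw [div_mul_eq_mul_div, lt_div_iff₀ (by positivity)]; exact hw
  set p₀ : X × Y × Y := (x₀, y₀, z₀)
  set Γ := coupledGraph F G p₀ r
  have hdescent : ∀ q ∈ scaleFst Λ '' Γ, dist w (q.2.1 - q.2.2) + μ * dist q (scaleFst Λ p₀) ≤ δ →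
      0 < dist w (q.2.1 - q.2.2) → ∃ q' ∈ scaleFst Λ '' Γ,
        dist w (q'.2.1 - q'.2.2) + μ * dist q' q < dist w (q.2.1 - q.2.2) := by
    rintro _ ⟨p, ⟨⟨hpF, hpG⟩, -⟩, rfl⟩ hregion hpos
    obtain ⟨p', hp'F, hp'G, hnear, hdesc⟩ := exists_scaleFst_descent (hF _ _ hpF) (hG _ _ hpG)
      hM hκ hκL hμ hμΛ (by nlinarith [inv_pos.2 hM]) (by nlinarith [inv_pos.2 hM]) hpos
      (div_pos (by linarith : 0 < μ * r - δ) hκ)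
    refine ⟨scaleFst Λ p', mem_image_of_mem _ ⟨⟨hp'F, hp'G⟩, ?_⟩, hdesc⟩
    rw [div_mul_cancel₀ _ hκ.ne'] at hnear
    refine mem_closedBall.2 <| (dist_le_dist_scaleFst hΛ _ _).trans (le_of_mul_le_mul_left ?_ hμ)
    nlinarith [dist_triangle (scaleFst Λ p') (scaleFst Λ p) (scaleFst Λ p₀),
      dist_nonneg (x := w) (y := p.2.1 - p.2.2)]
  obtain ⟨_, ⟨p, ⟨⟨hpF, hpG⟩, -⟩, rfl⟩, hfp, hdist⟩ := exists_eq_zero_of_strict_descent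
    (f := fun q : X × Y × Y => dist w (q.2.1 - q.2.2))
    ((isClosed_coupledGraph hΓF hΓG).image_scaleFst (by positivity))
    (by fun_prop : Continuous _).lowerSemicontinuous (fun _ _ => dist_nonneg) hμ
    (mem_image_of_mem _ ⟨⟨hy₀, hz₀⟩, mem_closedBall_self hr⟩) hdescent
  refine ⟨p.1, ?_, p.2.1, hpF, p.2.2, hpG, (dist_eq_zero.1 hfp).symm⟩
  rw [dist_scaleFst (by positivity), mul_max_of_nonneg _ _ hμ.le, ← mul_assoc, hμΛ] at hdist
  exact (le_max_left _ _).trans hdist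

end Coupling

theorem global_lyusternik_graves_general
    {X Y : Type*} [NormedAddCommGroup X] [NormedSpace ℝ X] [CompleteSpace X]
    [NormedAddCommGroup Y] [NormedSpace ℝ Y] [CompleteSpace Y]
    (F : X → Set Y) (G : Y → Set X)
    (L M : ℝ) (hM : 0 < M) (hLM : 1 < L * M)
    (hclF : ∀ x : X, ∀ y ∈ F x, ∃ r > 0,
      IsClosed ({q : X × Y | q.2 ∈ F q.1} ∩ Metric.closedBall (x, y) r))
    (hclG : ∀ y : Y, ∀ x ∈ G y, ∃ r > 0,
      IsClosed ({q : Y × X | q.2 ∈ G q.1} ∩ Metric.closedBall (y, x) r))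
    (hF : ∀ x : X, ∀ y ∈ F x, ∃ ε > 0, ∀ ρ ∈ Ioo (0:ℝ) ε,
      ball y (ρ * L) ⊆ ⋃ x' ∈ ball x ρ, F x')
    (hG : ∀ y : Y, ∀ x ∈ G y, ∃ ε > 0, ∀ ρ ∈ Ioo (0:ℝ) ε,
      ball x (ρ * M) ⊆ ⋃ y' ∈ ball y ρ, G y') :
    ∀ x : X, ∀ w ∈ F x - {y | x ∈ G y}, ∃ ε > 0, ∀ ρ ∈ Ioo (0:ℝ) ε,
      ball w (ρ * (L - M⁻¹)) ⊆ ⋃ x' ∈ ball x ρ, (F x' - {y | x' ∈ G y}) := by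
  rintro x _ ⟨y, hy, z, hz, rfl⟩
  obtain ⟨rF, hrF, hΓF⟩ := hclF x y hy
  obtain ⟨rG, hrG, hΓG⟩ := hclG z x hz
  have hP : 0 < L - M⁻¹ := by
    rw [sub_pos, inv_lt_iff_one_lt_mul₀ hM]; linarith
  have hΛ : 0 < L + M⁻¹ + 1 := by linarith [inv_pos.2 hM]
  set r := min rF rG
  refine ⟨r / (2 * (L + M⁻¹ + 1)), by positivity, fun ρ ⟨hρ, hρε⟩ w hw => ?_⟩
  set δ := dist w (y - z)
  have hδρ : δ / ρ < L - M⁻¹ := (div_lt_iff₀' hρ).2 (mem_ball.1 hw)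
  -- any rate strictly between `δ / ρ` and `L - M⁻¹` will do
  set κ := (δ / ρ + (L - M⁻¹)) / 2 with hκ_def
  have hδκ : δ < ρ * κ := (div_lt_iff₀' hρ).1 (by linarith)
  have hκ : (L - M⁻¹) / 2 ≤ κ := by
    linarith [div_nonneg (dist_nonneg (x := w) (y := y - z)) hρ.le]
  have hw' : δ * (L + M⁻¹ + 1) < κ * r := by
    rw [lt_div_iff₀ (by positivity)] at hρε
    nlinarith [lt_min hrF hrG]
  obtain ⟨x', hx', hw⟩ := exists_mem_sub_preimage_of_isOpenAtRate hF hG hM (by linarith)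
    (by linarith) hy hz (isClosed_inter_closedBall_of_le hΓF (min_le_left _ _))
    (isClosed_inter_closedBall_of_le hΓG (min_le_right _ _)) hw'
  exact mem_iUnion₂.2 ⟨x', mem_ball.2 (by nlinarith [dist_nonneg (x := x') (y := x)]), hw⟩

/-- Global fully set-valued Lyusternik–Graves theorem: if `F` is `L`-open at every
point of its graph and `G` is `M`-open at every point of its graph, with `L*M > 1` and
both graphs locally closed, then `F − G⁻¹` is `(L − M⁻¹)`-open at every point of its
graph. -/
theorem global_lyusternik_graves
    {X Y : Type*} [NormedAddCommGroup X] [NormedSpace ℝ X] [CompleteSpace X]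
    [NormedAddCommGroup Y] [NormedSpace ℝ Y] [CompleteSpace Y]
    (F : X → Set Y) (G : Y → Set X)
    (L M : ℝ) (hL : 0 < L) (hM : 0 < M) (hLM : 1 < L * M)
    (hclF : ∀ x : X, ∀ y ∈ F x, ∃ r > 0,
      IsClosed ({q : X × Y | q.2 ∈ F q.1} ∩ Metric.closedBall (x, y) r))
    (hclG : ∀ y : Y, ∀ x ∈ G y, ∃ r > 0,
      IsClosed ({q : Y × X | q.2 ∈ G q.1} ∩ Metric.closedBall (y, x) r))
    (hF : ∀ x : X, ∀ y ∈ F x, ∃ ε > 0, ∀ ρ ∈ Ioo (0:ℝ) ε,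
      ball y (ρ * L) ⊆ ⋃ x' ∈ ball x ρ, F x')
    (hG : ∀ y : Y, ∀ x ∈ G y, ∃ ε > 0, ∀ ρ ∈ Ioo (0:ℝ) ε,
      ball x (ρ * M) ⊆ ⋃ y' ∈ ball y ρ, G y') :
    ∀ x : X, ∀ w ∈ F x - {y | x ∈ G y}, ∃ ε > 0, ∀ ρ ∈ Ioo (0:ℝ) ε,
      ball w (ρ * (L - M⁻¹)) ⊆ ⋃ x' ∈ ball x ρ, (F x' - {y | x' ∈ G y}) :=
  global_lyusternik_graves_general F G L M hM hLM hclF hclG hF hG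
end
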